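/- arXiv:1806.02668 — 5 statements merged into one kernel-verified Lean document; each statement's English description precedes it below -/
import Mathlib

section
/- Let k be a perfect field of characteristic 2 and R = k[[s,t]] the ring of formal power series in two variables s, t, with maximal ideal m. Let c_xx, c_yy, c_zz, c_xy, c_xz, c_yz ∈ R be such that the constant terms of c_xy, c_xz and c_yz are all zero, and set δ := c_xy·c_yz·c_xz + c_xz²·c_yy + c_yz²·c_xx + c_xy²·c_zz ∈ R. Then there do not exist a unit U ∈ R and elements f₁, f₂ ∈ m whose degree-one homogeneous parts are k-linearly independent, such that δ = U·f₁·f₂. (In other words, in characteristic 2 the discriminant of a conic bundle can never consist, formally locally around a point over which the fibre is a double line, of two smooth branches meeting transversely at that point.) -/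
open MvPowerSeries

/-!
Compare the coefficients of `st` on both sides of `δ = U f₁ f₂`. Since `2 = 0`, each
`φ² ψ` with `φ(0) = 0` has no `st` term, and neither has the product of the three mixed
coefficients, which lies in `m³`; so the `st`-coefficient of `δ` vanishes. On the other side it
is `U(0)` times `a₀b₁ + a₁b₀`, which in characteristic 2 is the determinant of the linear
parts `a`, `b` of `f₁`, `f₂`, hence nonzero.
-/

open Finsupp

section LowOrderCoeffs

variable {k : Type*} [CommRing k]

lemma coeff_single_one_mul {σ : Type*} (φ ψ : MvPowerSeries σ k) (i : σ) :
    coeff (single i 1) (φ * ψ) =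
      coeff (single i 1) φ * constantCoeff ψ + constantCoeff φ * coeff (single i 1) ψ := by
  classical
  rw [coeff_mul, antidiagonal_single, Finset.sum_map,
    show (Finset.HasAntidiagonal.antidiagonal 1 : Finset (ℕ × ℕ)) = {(0, 1), (1, 0)} from rfl,
    Finset.sum_insert (by decide), Finset.sum_singleton]
  simp [coeff_zero_eq_constantCoeff, add_comm]

lemma antidiagonal_single_zero_add_single_one :
    Finset.HasAntidiagonal.antidiagonal (single (0 : Fin 2) 1 + single 1 1) =
      {(0, single 0 1 + single 1 1), (single 0 1, single 1 1),
       (single 1 1, single 0 1), (single 0 1 + single 1 1, 0)} := by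
  ext ⟨e, f⟩
  simp only [Finset.HasAntidiagonal.mem_antidiagonal, Finset.mem_insert, Finset.mem_singleton,
    Prod.ext_iff, DFunLike.ext_iff, Fin.forall_fin_two, Finsupp.add_apply, single_apply, coe_zero,
    Pi.zero_apply]
  norm_num
  omega

lemma coeff_single_zero_add_single_one_mul {φ ψ : MvPowerSeries (Fin 2) k}
    (hφ : constantCoeff φ = 0) (hψ : constantCoeff ψ = 0) :
    coeff (single 0 1 + single 1 1) (φ * ψ) =
      coeff (single 0 1) φ * coeff (single 1 1) ψ +
        coeff (single 1 1) φ * coeff (single 0 1) ψ := by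
  classical
  rw [coeff_mul, antidiagonal_single_zero_add_single_one]
  repeat rw [Finset.sum_insert (by simp [Prod.ext_iff, DFunLike.ext_iff, Fin.forall_fin_two,
    single_apply])]
  rw [Finset.sum_singleton]
  simp [coeff_zero_eq_constantCoeff, hφ, hψ]

lemma coeff_single_zero_add_single_one_mul_mul_eq_zero {φ ψ χ : MvPowerSeries (Fin 2) k}
    (hφ : constantCoeff φ = 0) (hψ : constantCoeff ψ = 0) (hχ : constantCoeff χ = 0) :
    coeff (single 0 1 + single 1 1) (φ * ψ * χ) = 0 := by
  have hφψ : constantCoeff (φ * ψ) = 0 := by rw [map_mul, hφ, zero_mul]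
  rw [coeff_single_zero_add_single_one_mul hφψ hχ, coeff_single_one_mul, coeff_single_one_mul,
    hφ, hψ]
  ring

lemma coeff_single_zero_add_single_one_sq_mul_eq_zero [CharP k 2] {φ : MvPowerSeries (Fin 2) k}
    (hφ : constantCoeff φ = 0) (ψ : MvPowerSeries (Fin 2) k) :
    coeff (single 0 1 + single 1 1) (φ ^ 2 * ψ) = 0 := by
  have hφψ : constantCoeff (φ * ψ) = 0 := by rw [map_mul, hφ, zero_mul]
  rw [sq, mul_assoc, coeff_single_zero_add_single_one_mul hφ hφψ, coeff_single_one_mul,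
    coeff_single_one_mul, hφ]
  linear_combination (coeff (single 0 1) φ * coeff (single 1 1) φ * constantCoeff ψ) *
    CharTwo.two_eq_zero (R := k)

lemma coeff_single_zero_add_single_one_mul_mul
    (U : MvPowerSeries (Fin 2) k) {φ ψ : MvPowerSeries (Fin 2) k}
    (hφ : constantCoeff φ = 0) (hψ : constantCoeff ψ = 0) :
    coeff (single 0 1 + single 1 1) (U * φ * ψ) =
      constantCoeff U * (coeff (single 0 1) φ * coeff (single 1 1) ψ +
        coeff (single 1 1) φ * coeff (single 0 1) ψ) := by
  rw [coeff_single_zero_add_single_one_mul (by rw [map_mul, hφ, mul_zero]) hψ,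
    coeff_single_one_mul, coeff_single_one_mul, hφ]
  ring

lemma coeff_single_zero_add_single_one_discriminant_eq_zero [CharP k 2]
    {cxy cxz cyz : MvPowerSeries (Fin 2) k} (cxx cyy czz : MvPowerSeries (Fin 2) k)
    (hxy : constantCoeff cxy = 0) (hxz : constantCoeff cxz = 0) (hyz : constantCoeff cyz = 0) :
    coeff (single 0 1 + single 1 1)
      (cxy * cyz * cxz + cxz ^ 2 * cyy + cyz ^ 2 * cxx + cxy ^ 2 * czz) = 0 := by
  simp only [map_add, coeff_single_zero_add_single_one_mul_mul_eq_zero hxy hyz hxz,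
    coeff_single_zero_add_single_one_sq_mul_eq_zero hxz,
    coeff_single_zero_add_single_one_sq_mul_eq_zero hyz,
    coeff_single_zero_add_single_one_sq_mul_eq_zero hxy, add_zero]

end LowOrderCoeffs

lemma mul_add_mul_ne_zero_of_linearIndependent {k : Type*} [Field k] [CharP k 2]
    {a b : Fin 2 → k} (h : LinearIndependent k ![a, b]) :
    a 0 * b 1 + a 1 * b 0 ≠ 0 := by
  have hA := (Matrix.linearIndependent_rows_iff_isUnit (A := Matrix.of ![a, b])).mp h
  rw [Matrix.isUnit_iff_isUnit_det, Matrix.det_fin_two, isUnit_iff_ne_zero] at hA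
  simpa [CharTwo.sub_eq_add] using hA

theorem discriminant_no_two_transverse_branches_general
    (k : Type*) [Field k] [CharP k 2]
    (cxx cyy czz cxy cxz cyz : MvPowerSeries (Fin 2) k)
    (hxy : constantCoeff cxy = 0)
    (hxz : constantCoeff cxz = 0)
    (hyz : constantCoeff cyz = 0)
    (δ : MvPowerSeries (Fin 2) k)
    (hδ : δ = cxy * cyz * cxz + cxz ^ 2 * cyy + cyz ^ 2 * cxx + cxy ^ 2 * czz) :
    ¬ ∃ (U f₁ f₂ : MvPowerSeries (Fin 2) k),
        IsUnit U ∧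
        constantCoeff f₁ = 0 ∧
        constantCoeff f₂ = 0 ∧
        LinearIndependent k
          ![fun i : Fin 2 => coeff (Finsupp.single i 1) f₁,
            fun i : Fin 2 => coeff (Finsupp.single i 1) f₂] ∧
        δ = U * f₁ * f₂ := by
  rintro ⟨U, f₁, f₂, hU, hf₁, hf₂, hlin, rfl⟩
  have hst := coeff_single_zero_add_single_one_discriminant_eq_zero cxx cyy czz hxy hxz hyz
  rw [← hδ, coeff_single_zero_add_single_one_mul_mul U hf₁ hf₂] at hst
  exact mul_ne_zero (isUnit_constantCoeff U hU).ne_zero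
    (mul_add_mul_ne_zero_of_linearIndependent hlin) hst

/-- In characteristic 2, the discriminant
`δ = c_xy c_yz c_xz + c_xz² c_yy + c_yz² c_xx + c_xy² c_zz` of a ternary quadratic form
over `k[[s,t]]` whose mixed coefficients have vanishing constant term (i.e. the central
fibre is a double line) cannot be a unit times a product of two elements of the maximal
ideal with linearly independent linear parts. -/
theorem discriminant_no_two_transverse_branches
    (k : Type*) [Field k] [PerfectField k] [CharP k 2]
    (cxx cyy czz cxy cxz cyz : MvPowerSeries (Fin 2) k)
    (hxy : constantCoeff cxy = 0)
    (hxz : constantCoeff cxz = 0)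
    (hyz : constantCoeff cyz = 0)
    (δ : MvPowerSeries (Fin 2) k)
    (hδ : δ = cxy * cyz * cxz + cxz ^ 2 * cyy + cyz ^ 2 * cxx + cxy ^ 2 * czz) :
    ¬ ∃ (U f₁ f₂ : MvPowerSeries (Fin 2) k),
        IsUnit U ∧
        constantCoeff f₁ = 0 ∧
        constantCoeff f₂ = 0 ∧
        LinearIndependent k
          ![fun i : Fin 2 => coeff (Finsupp.single i 1) f₁,
            fun i : Fin 2 => coeff (Finsupp.single i 1) f₂] ∧
        δ = U * f₁ * f₂ :=
  discriminant_no_two_transverse_branches_general k cxx cyy czz cxy cxz cyz hxy hxz hyz δ hδ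
end

section
/- The image of D in 𝔽₂[u,v,w] equals u·w·(u+w)·(u·(v²+uv+vw+w²) + v³). (That is, modulo 2 the discriminant of the conic bundle X factors as the three lines u = 0, w = 0, u+w = 0 together with the cubic u·(v²+uv+vw+w²) + v³ = 0.) -/
/-!
Write the quadratic form as `q = a x² + b y² + c z² + d xy + e xz + f yz`, so that `S` is its Gram
matrix `!![2a, d, e; d, 2b, f; e, f, 2c]`. Expanding the determinant gives
`det S = 2 (4abc + def - af² - be² - cd²)`, so `D` is the bracket, and modulo `2` it becomes
`def + af² + be² + cd²`, which for the entries of `S` factors as claimed in `𝔽₂[u,v,w]`.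
-/

open MvPolynomial

/-- The symmetric matrix `S` over `ℤ[u,v,w]` (with `u = X 0`, `v = X 1`, `w = X 2`)
defining the conic bundle `X ⊂ ℙ² × ℙ²`. -/
noncomputable def Smat : Matrix (Fin 3) (Fin 3) (MvPolynomial (Fin 3) ℤ) :=
  !![2*(X 0)*(X 1) + 4*(X 1)^2 + 2*(X 0)*(X 2) + 2*(X 2)^2,
       (X 0)^2 + (X 0)*(X 2) + (X 2)^2,
       (X 0)*(X 1);
     (X 0)^2 + (X 0)*(X 2) + (X 2)^2,
       2*(X 0)^2 + 2*(X 1)*(X 2) + 2*(X 2)^2,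
       (X 0)^2 + (X 1)*(X 2) + (X 2)^2;
     (X 0)*(X 1),
       (X 0)^2 + (X 1)*(X 2) + (X 2)^2,
       2*(X 1)^2 + 2*(X 0)*(X 2) + 2*(X 2)^2]

section TernaryQuadraticForm

variable {R : Type*} [CommRing R]

def ternaryGram (a b c d e f : R) : Matrix (Fin 3) (Fin 3) R :=
  !![2 * a, d, e; d, 2 * b, f; e, f, 2 * c]

def ternaryHalfDisc (a b c d e f : R) : R :=
  4 * a * b * c + d * e * f - a * f ^ 2 - b * e ^ 2 - c * d ^ 2

theorem det_ternaryGram (a b c d e f : R) :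
    (ternaryGram a b c d e f).det = 2 * ternaryHalfDisc a b c d e f := by
  simp only [ternaryGram, ternaryHalfDisc, Matrix.det_fin_three, Matrix.of_apply,
    Matrix.cons_val', Matrix.cons_val_zero, Matrix.cons_val_one, Matrix.cons_val,
    Matrix.cons_val_fin_one, Fin.isValue]
  ring

theorem map_ternaryHalfDisc {S : Type*} [CommRing S] (φ : R →+* S) (a b c d e f : R) :
    φ (ternaryHalfDisc a b c d e f) =
      ternaryHalfDisc (φ a) (φ b) (φ c) (φ d) (φ e) (φ f) := by
  simp only [ternaryHalfDisc, map_sub, map_add, map_mul, map_pow, map_ofNat]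

theorem ternaryHalfDisc_of_charTwo [CharP R 2] (a b c d e f : R) :
    ternaryHalfDisc a b c d e f = d * e * f + a * f ^ 2 + b * e ^ 2 + c * d ^ 2 := by
  unfold ternaryHalfDisc
  grind

end TernaryQuadraticForm

theorem Smat_eq_ternaryGram :
    Smat = ternaryGram (X 0 * X 1 + 2 * X 1 ^ 2 + X 0 * X 2 + X 2 ^ 2)
      (X 0 ^ 2 + X 1 * X 2 + X 2 ^ 2) (X 1 ^ 2 + X 0 * X 2 + X 2 ^ 2)
      (X 0 ^ 2 + X 0 * X 2 + X 2 ^ 2) (X 0 * X 1) (X 0 ^ 2 + X 1 * X 2 + X 2 ^ 2) := by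
  ext i j : 1
  fin_cases i <;> fin_cases j <;>
    simp only [Smat, ternaryGram, Matrix.of_apply, Matrix.cons_val', Matrix.cons_val_zero,
      Matrix.cons_val_one, Matrix.cons_val, Matrix.cons_val_fin_one, Fin.isValue, Fin.mk_one,
      Fin.zero_eta, Fin.reduceFinMk] <;>
    ring

/-- Modulo 2, the discriminant `D` (where `2·D = det S`) factors as
`u·w·(u+w)·(u·(v²+uv+vw+w²) + v³)` in `𝔽₂[u,v,w]` (here `u = X 0`, `v = X 1`, `w = X 2`). -/
theorem discriminant_mod_two_factorization
    (D : MvPolynomial (Fin 3) ℤ) (hD : 2 * D = Smat.det) :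
    MvPolynomial.map (Int.castRingHom (ZMod 2)) D =
      X 0 * X 2 * (X 0 + X 2) *
        (X 0 * ((X 1)^2 + (X 0)*(X 1) + (X 1)*(X 2) + (X 2)^2) + (X 1)^3) := by
  rw [Smat_eq_ternaryGram, det_ternaryGram] at hD
  rw [mul_left_cancel₀ two_ne_zero hD, map_ternaryHalfDisc, ternaryHalfDisc_of_charTwo]
  simp only [map_add, map_mul, map_pow, map_X, map_ofNat]
  grind
end

section
/- Let K be an algebraic closure of 𝔽₂ and let c = u·(v²+uv+vw+w²) + v³, viewed in K[u,v,w]. Then the plane projective cubic c = 0 is smooth: there is no (u₀,v₀,w₀) ∈ K³ ∖ {0} at which c, ∂c/∂u, ∂c/∂v and ∂c/∂w all vanish. (Hence c = 0 defines a smooth elliptic curve E in the projective plane over the algebraic closure of 𝔽₂.) -/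
/-!
In characteristic 2 the partial derivatives of `c` at `(u, v, w)` are `v² + vw + w²`,
`u² + uw + v²` and `uv`. Where they all vanish, either `u = 0`, which forces `v² = 0` and then
`w² = 0`, or `v = 0`, which forces `w² = 0` and then `u² = 0`.
-/

open MvPolynomial

noncomputable def cubic (R : Type*) [CommSemiring R] : MvPolynomial (Fin 3) R :=
  X 0 * (X 1 ^ 2 + X 0 * X 1 + X 1 * X 2 + X 2 ^ 2) + X 1 ^ 3

section CharTwo

variable {R : Type*} [CommRing R] [CharP R 2] (P : Fin 3 → R)

theorem eval_pderiv_zero_cubic :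
    eval P (pderiv 0 (cubic R)) = P 1 ^ 2 + P 1 * P 2 + P 2 ^ 2 := by
  have h2 : (2 : R) = 0 := CharTwo.two_eq_zero
  simp only [cubic, map_add, map_mul, map_pow, Derivation.leibniz, Derivation.leibniz_pow, pderiv_X,
    Pi.single_apply, Fin.reduceEq, if_true, if_false, smul_eq_mul, nsmul_eq_mul, eval_X,
    map_zero, map_one, map_natCast]
  linear_combination P 0 * P 1 * h2

theorem eval_pderiv_one_cubic :
    eval P (pderiv 1 (cubic R)) = P 0 ^ 2 + P 0 * P 2 + P 1 ^ 2 := by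
  have h2 : (2 : R) = 0 := CharTwo.two_eq_zero
  simp only [cubic, map_add, map_mul, map_pow, Derivation.leibniz, Derivation.leibniz_pow, pderiv_X,
    Pi.single_apply, Fin.reduceEq, if_true, if_false, smul_eq_mul, nsmul_eq_mul, eval_X,
    map_zero, map_one, map_natCast]
  linear_combination (P 0 * P 1 + P 1 ^ 2) * h2

theorem eval_pderiv_two_cubic : eval P (pderiv 2 (cubic R)) = P 0 * P 1 := by
  have h2 : (2 : R) = 0 := CharTwo.two_eq_zero
  simp only [cubic, map_add, map_mul, map_pow, Derivation.leibniz, Derivation.leibniz_pow, pderiv_X,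
    Pi.single_apply, Fin.reduceEq, if_true, if_false, smul_eq_mul, nsmul_eq_mul, eval_X,
    map_zero, map_one, map_natCast]
  linear_combination P 0 * P 2 * h2

end CharTwo

theorem eq_zero_of_quadrics_eq_zero {R : Type*} [CommRing R] [NoZeroDivisors R] {u v w : R}
    (hu : v ^ 2 + v * w + w ^ 2 = 0) (hv : u ^ 2 + u * w + v ^ 2 = 0) (hw : u * v = 0) :
    u = 0 ∧ v = 0 ∧ w = 0 := by
  rcases mul_eq_zero.mp hw with rfl | rfl
  · obtain rfl : v = 0 := pow_eq_zero_iff two_ne_zero |>.mp (by simpa using hv)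
    exact ⟨rfl, rfl, pow_eq_zero_iff two_ne_zero |>.mp (by simpa using hu)⟩
  · obtain rfl : w = 0 := pow_eq_zero_iff two_ne_zero |>.mp (by simpa using hu)
    exact ⟨pow_eq_zero_iff two_ne_zero |>.mp (by simpa using hv), rfl, rfl⟩

theorem eq_zero_of_eval_pderiv_cubic_eq_zero {R : Type*} [CommRing R] [NoZeroDivisors R]
    [CharP R 2] {P : Fin 3 → R} (h : ∀ i, eval P (pderiv i (cubic R)) = 0) : P = 0 := by
  obtain ⟨h0, h1, h2⟩ := eq_zero_of_quadrics_eq_zero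
    ((eval_pderiv_zero_cubic P).symm.trans (h 0))
    ((eval_pderiv_one_cubic P).symm.trans (h 1))
    ((eval_pderiv_two_cubic P).symm.trans (h 2))
  ext i
  fin_cases i <;> assumption

theorem cubic_is_smooth_general
    (K : Type*) [Field K] [Algebra (ZMod 2) K]
    (c : MvPolynomial (Fin 3) K)
    (hc : c = X 0 * ((X 1)^2 + (X 0)*(X 1) + (X 1)*(X 2) + (X 2)^2) + (X 1)^3) :
    ¬ ∃ P : Fin 3 → K, P ≠ 0 ∧
        eval P c = 0 ∧ (∀ i : Fin 3, eval P (pderiv i c) = 0) := by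
  have : CharP K 2 := charP_of_injective_algebraMap' (ZMod 2) 2
  rintro ⟨P, hP, -, hd⟩
  subst hc
  exact hP (eq_zero_of_eval_pderiv_cubic_eq_zero hd)

/-- The plane projective cubic `c = u·(v²+uv+vw+w²) + v³ = 0` is smooth over
an algebraic closure `K` of `𝔽₂`: there is no nonzero point of `K³` at which `c` and all
three formal partial derivatives of `c` vanish.  (Here `u = X 0`, `v = X 1`, `w = X 2`.) -/
theorem cubic_is_smooth
    (K : Type*) [Field K] [IsAlgClosed K] [Algebra (ZMod 2) K]
    [Algebra.IsAlgebraic (ZMod 2) K]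
    (c : MvPolynomial (Fin 3) K)
    (hc : c = X 0 * ((X 1)^2 + (X 0)*(X 1) + (X 1)*(X 2) + (X 2)^2) + (X 1)^3) :
    ¬ ∃ P : Fin 3 → K, P ≠ 0 ∧
        eval P c = 0 ∧ (∀ i : Fin 3, eval P (pderiv i c) = 0) :=
  cubic_is_smooth_general K c hc
end

section
/- Let k be a field of characteristic 2 and a, b, c ∈ k not all zero. Set Q(x,y,z) = a·x² + a·xz + b·y² + b·yz + c·z². Then there exists (x,y,z) ∈ k³ ∖ {0} at which Q and its three formal partial derivatives ∂Q/∂x, ∂Q/∂y, ∂Q/∂z all vanish if and only if a·b·(a+b) = 0. (Thus the discriminant of the conic bundle a x² + a xz + b y² + b yz + c z² = 0, with a, b, c linear forms on the base, consists of the three lines a = 0, b = 0 and a = b.) -/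
/-!
In characteristic 2 the partial derivatives of `Q` are `a z`, `b z` and `a x + b y`. If `a`, `b`,
`a + b` are all nonzero, a singular point has `z = 0`, and then `a x + b y = 0` and
`a x² + b y² = 0` force `a (a + b) x² = 0`, so the point is `0`. Conversely the point `(b : a : 0)`
on the line `a x + b y = 0` satisfies `Q(b, a, 0) = a b (a + b)`, so it is singular as soon as
`a b (a + b) = 0`; when `a = b = 0` take `(1 : 0 : 0)` instead.
-/

open MvPolynomial

def IsSingularAt {R σ : Type*} [CommSemiring R] (F : MvPolynomial σ R) (P : σ → R) : Prop :=
  eval P F = 0 ∧ ∀ i, eval P (pderiv i F) = 0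

section

variable {R : Type*} [CommRing R]

noncomputable def conic (a b c : R) : MvPolynomial (Fin 3) R :=
  C a * (X 0)^2 + C a * (X 0 * X 2) + C b * (X 1)^2 + C b * (X 1 * X 2) + C c * (X 2)^2

variable [CharP R 2]

theorem isSingularAt_conic_iff (a b c : R) (P : Fin 3 → R) :
    IsSingularAt (conic a b c) P ↔
      a * P 0 ^ 2 + a * P 0 * P 2 + b * P 1 ^ 2 + b * P 1 * P 2 + c * P 2 ^ 2 = 0 ∧
        a * P 2 = 0 ∧ b * P 2 = 0 ∧ a * P 0 + b * P 1 = 0 := by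
  have h2 : (2 : R) = 0 := CharTwo.two_eq_zero
  simp only [IsSingularAt, Fin.forall_fin_succ, IsEmpty.forall_iff, and_true]
  simp [conic, pderiv_X, h2, mul_assoc]

theorem isSingularAt_conic_iff_of_apply_two_eq_zero (a b c : R) (P : Fin 3 → R) (hP : P 2 = 0) :
    IsSingularAt (conic a b c) P ↔ a * P 0 ^ 2 + b * P 1 ^ 2 = 0 ∧ a * P 0 + b * P 1 = 0 := by
  simp [isSingularAt_conic_iff, hP]

theorem isSingularAt_conic_ba_zero_iff (a b c : R) :
    IsSingularAt (conic a b c) ![b, a, 0] ↔ a * b * (a + b) = 0 := by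
  rw [isSingularAt_conic_iff_of_apply_two_eq_zero _ _ _ _ rfl]
  simp only [Matrix.cons_val_zero, Matrix.cons_val_one]
  have hline : a * b + b * a = 0 := by rw [mul_comm b, CharTwo.add_self_eq_zero]
  constructor
  · rintro ⟨h, -⟩
    linear_combination h
  · intro h
    exact ⟨by linear_combination h, hline⟩

end

theorem eq_zero_of_isSingularAt_conic {k : Type*} [Field k] [CharP k 2] {a b c : k}
    (ha : a ≠ 0) (hb : b ≠ 0) (hab : a + b ≠ 0) {P : Fin 3 → k}
    (hP : IsSingularAt (conic a b c) P) : P = 0 := by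
  have hz : P 2 = 0 :=
    (mul_eq_zero.1 ((isSingularAt_conic_iff a b c P).1 hP).2.1).resolve_left ha
  obtain ⟨hQ, hline⟩ := (isSingularAt_conic_iff_of_apply_two_eq_zero a b c P hz).1 hP
  have hx : P 0 = 0 := by
    have : a * (a + b) * P 0 ^ 2 = 0 := by
      linear_combination b * hQ + (a * P 0 - b * P 1) * hline
    simpa [ha, hab] using this
  have hy : P 1 = 0 := by
    simpa [hx, hb] using hline
  ext i
  fin_cases i <;> assumption

theorem discriminant_is_three_lines_general
    (k : Type*) [Field k] [CharP k 2] (a b c : k)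
    (Q : MvPolynomial (Fin 3) k)
    (hQ : Q = C a * (X 0)^2 + C a * (X 0 * X 2) + C b * (X 1)^2
        + C b * (X 1 * X 2) + C c * (X 2)^2) :
    (∃ P : Fin 3 → k, P ≠ 0 ∧ eval P Q = 0 ∧ ∀ i : Fin 3, eval P (pderiv i Q) = 0)
      ↔ a * b * (a + b) = 0 := by
  change (∃ P, P ≠ 0 ∧ IsSingularAt Q P) ↔ _
  subst hQ
  constructor
  · rintro ⟨P, hP0, hP⟩
    by_contra h
    simp only [mul_eq_zero, not_or] at h
    exact hP0 (eq_zero_of_isSingularAt_conic h.1.1 h.1.2 h.2 hP)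
  · intro h
    by_cases hab : a = 0 ∧ b = 0
    · obtain ⟨rfl, rfl⟩ := hab
      exact ⟨![1, 0, 0], by simp,
        (isSingularAt_conic_iff_of_apply_two_eq_zero _ _ _ _ rfl).2 (by simp)⟩
    · refine ⟨![b, a, 0], ?_, (isSingularAt_conic_ba_zero_iff a b c).2 h⟩
      contrapose! hab
      exact ⟨by simpa using congrFun hab 1, by simpa using congrFun hab 0⟩

/-- over a field `k` of characteristic 2, for `a, b, c ∈ k` not all zero,
the conic `Q = a·x² + a·xz + b·y² + b·yz + c·z²` (with `x = X 0`, `y = X 1`, `z = X 2`)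
has a singular point (a nonzero common zero of `Q` and its three formal partial
derivatives) if and only if `a·b·(a+b) = 0`. -/
theorem discriminant_is_three_lines
    (k : Type*) [Field k] [CharP k 2] (a b c : k)
    (habc : ¬ (a = 0 ∧ b = 0 ∧ c = 0))
    (Q : MvPolynomial (Fin 3) k)
    (hQ : Q = C a * (X 0)^2 + C a * (X 0 * X 2) + C b * (X 1)^2
        + C b * (X 1 * X 2) + C c * (X 2)^2) :
    (∃ P : Fin 3 → k, P ≠ 0 ∧ eval P Q = 0 ∧ ∀ i : Fin 3, eval P (pderiv i Q) = 0)
      ↔ a * b * (a + b) = 0 :=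
  discriminant_is_three_lines_general k a b c Q hQ
end

section
/- Let k be a field of characteristic 2, n ≥ 1 an integer, and α, β ∈ k[[u,v]] formal power series with nonzero constant term. In k[[x,y,u,v]] consider f = x² + x·y + α(u,v)·y² + β(u,v)·u·(u + vⁿ). Then under the substitution (x,y,u,v) ↦ (x·v, y·v, u·v, v), which is a well-defined substitution of formal power series, f is transformed into v²·(x² + x·y + α'(u,v)·y² + β'(u,v)·u·(u + v^{n−1})), where α'(u,v) = α(uv, v) and β'(u,v) = β(uv, v) again have nonzero constant term. (This is the blow-up chart in which the singularity x² + xy + αy² + βu(u+vⁿ) = 0 at the origin reproduces itself with n replaced by n−1.) -/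
open MvPowerSeries

/-- The substitution `(x,y,u,v) ↦ (x·v, y·v, u·v, v)` on `k[[x,y,u,v]]`
(variables `x = 0`, `y = 1`, `u = 2`, `v = 3`): the monomial `x^a y^b u^c v^d` is sent to
`x^a y^b u^c v^{a+b+c+d}`, so the coefficient of the result at the exponent `e` is the
coefficient of `f` at the exponent obtained by replacing `e 3` with
`e 3 - (e 0 + e 1 + e 2)`, provided `e 0 + e 1 + e 2 ≤ e 3`, and `0` otherwise. -/
noncomputable def blowupSubst {k : Type*} [CommRing k]
    (f : MvPowerSeries (Fin 4) k) : MvPowerSeries (Fin 4) k :=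
  fun e => if e 0 + e 1 + e 2 ≤ e 3 then
    coeff (Finsupp.update e 3 (e 3 - (e 0 + e 1 + e 2))) f else 0

/-- The inclusion `k[[u,v]] → k[[x,y,u,v]]` sending `u, v` to the variables `2, 3`. -/
noncomputable def embedUV {k : Type*} [CommRing k]
    (g : MvPowerSeries (Fin 2) k) : MvPowerSeries (Fin 4) k :=
  fun e => if e 0 = 0 ∧ e 1 = 0 then
    coeff (Finsupp.single 0 (e 2) + Finsupp.single 1 (e 3)) g else 0

/-- The substitution `(u,v) ↦ (u·v, v)` on `k[[u,v]]`: the monomial `u^i v^j` is sent to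
`u^i v^{i+j}`. -/
noncomputable def substUV {k : Type*} [CommRing k]
    (g : MvPowerSeries (Fin 2) k) : MvPowerSeries (Fin 2) k :=
  fun e => if e 0 ≤ e 1 then
    coeff (Finsupp.single 0 (e 0) + Finsupp.single 1 (e 1 - e 0)) g else 0

/-! The substitution sends `x^a y^b u^c v^d` to `x^a y^b u^c v^(a+b+c+d)`, so it commutes with
multiplication by a monomial up to the extra factor `v^(a+b+c)`, and on series in `u, v` alone it
is `(u, v) ↦ (uv, v)`. Every term of `f` is such a series times a monomial of degree two in
`x, y, u`, so each picks up exactly `v²`; in the last term `u·vⁿ` this `v²` is split off from `vⁿ`.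
Constant terms are untouched by the substitution. -/

namespace BlowupChart

open Finsupp

variable {R : Type*} [CommRing R]

theorem finsupp_fin4_le_iff (a b : Fin 4 →₀ ℕ) :
    a ≤ b ↔ a 0 ≤ b 0 ∧ a 1 ≤ b 1 ∧ a 2 ≤ b 2 ∧ a 3 ≤ b 3 := by
  simp [Finsupp.le_def, Fin.forall_fin_succ]

theorem finsupp_fin4_ext_iff (a b : Fin 4 →₀ ℕ) :
    a = b ↔ a 0 = b 0 ∧ a 1 = b 1 ∧ a 2 = b 2 ∧ a 3 = b 3 := by
  simp [Finsupp.ext_iff, Fin.forall_fin_succ]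

theorem coeff_blowupSubst (f : MvPowerSeries (Fin 4) R) (e : Fin 4 →₀ ℕ) :
    coeff e (blowupSubst f) = if e 0 + e 1 + e 2 ≤ e 3 then
      coeff (update e 3 (e 3 - (e 0 + e 1 + e 2))) f else 0 := rfl

theorem coeff_embedUV (g : MvPowerSeries (Fin 2) R) (e : Fin 4 →₀ ℕ) :
    coeff e (embedUV g) = if e 0 = 0 ∧ e 1 = 0 then
      coeff (single 0 (e 2) + single 1 (e 3)) g else 0 := rfl

theorem coeff_substUV (g : MvPowerSeries (Fin 2) R) (e : Fin 2 →₀ ℕ) :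
    coeff e (substUV g) = if e 0 ≤ e 1 then
      coeff (single 0 (e 0) + single 1 (e 1 - e 0)) g else 0 := rfl

theorem blowupSubst_add (f g : MvPowerSeries (Fin 4) R) :
    blowupSubst (f + g) = blowupSubst f + blowupSubst g := by
  ext e
  simp only [coeff_blowupSubst, map_add]
  split_ifs <;> simp

theorem blowupSubst_monomial_mul (m : Fin 4 →₀ ℕ) (f : MvPowerSeries (Fin 4) R) :
    blowupSubst (monomial m 1 * f)
      = monomial (m + single 3 (m 0 + m 1 + m 2)) 1 * blowupSubst f := by
  ext e
  simp only [coeff_blowupSubst, coeff_monomial_mul, one_mul, finsupp_fin4_le_iff, coe_update,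
    Function.update_apply, coe_add, coe_tsub, Pi.add_apply, Pi.sub_apply, single_apply,
    Fin.reduceEq, ↓reduceIte, add_zero]
  split_ifs <;> first
    | rfl
    | omega
    | (congr 2; simp [finsupp_fin4_ext_iff]; omega)

theorem blowupSubst_embedUV (g : MvPowerSeries (Fin 2) R) :
    blowupSubst (embedUV g) = embedUV (substUV g) := by
  ext e
  simp only [coeff_blowupSubst, coeff_embedUV, coeff_substUV, coe_update, Function.update_apply,
    coe_add, Pi.add_apply, single_apply, Fin.reduceEq, ↓reduceIte, add_zero, zero_add]
  split_ifs with _ h <;> first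
    | rfl
    | omega
    | simp [h.1, h.2]

theorem blowupSubst_one : blowupSubst (1 : MvPowerSeries (Fin 4) R) = 1 := by
  ext e
  simp only [coeff_blowupSubst, coeff_one, finsupp_fin4_ext_iff, coe_update, Function.update_apply,
    coe_zero, Pi.zero_apply, Fin.reduceEq, ↓reduceIte]
  split_ifs <;> first | rfl | omega

theorem blowupSubst_X_mul {i : Fin 4} (hi : i ≠ 3) (f : MvPowerSeries (Fin 4) R) :
    blowupSubst (X i * f) = X 3 * X i * blowupSubst f := by
  have hdeg : single i 1 0 + single i 1 1 + single i 1 2 = 1 := by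
    fin_cases i <;> simp_all
  rw [X_def, blowupSubst_monomial_mul, hdeg, X_def, monomial_mul_monomial, add_comm, mul_one]

theorem blowupSubst_X_three_pow_mul (d : ℕ) (f : MvPowerSeries (Fin 4) R) :
    blowupSubst (X 3 ^ d * f) = X 3 ^ d * blowupSubst f := by
  simp [X_pow_eq, blowupSubst_monomial_mul]

theorem constantCoeff_substUV (g : MvPowerSeries (Fin 2) R) :
    constantCoeff (substUV g) = constantCoeff g := by
  rw [← coeff_zero_eq_constantCoeff_apply, coeff_substUV]
  simp

end BlowupChart

open BlowupChart in
theorem blowup_chart_self_similar_general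
    (k : Type*) [Field k] (n : ℕ) (hn : 1 ≤ n)
    (α β : MvPowerSeries (Fin 2) k)
    (hα : constantCoeff α ≠ 0)
    (hβ : constantCoeff β ≠ 0)
    (f : MvPowerSeries (Fin 4) k)
    (hf : f = (X 0)^2 + X 0 * X 1 + embedUV α * (X 1)^2
        + embedUV β * (X 2 * (X 2 + (X 3)^n))) :
    blowupSubst f = (X 3)^2 * ((X 0)^2 + X 0 * X 1 + embedUV (substUV α) * (X 1)^2
        + embedUV (substUV β) * (X 2 * (X 2 + (X 3)^(n-1)))) ∧
    constantCoeff (substUV α) ≠ 0 ∧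
    constantCoeff (substUV β) ≠ 0 := by
  refine ⟨?_, by rwa [constantCoeff_substUV], by rwa [constantCoeff_substUV]⟩
  obtain ⟨m, rfl⟩ := Nat.exists_eq_add_of_le' hn
  have hf' : f = X 0 * (X 0 * 1) + X 0 * (X 1 * 1) + X 1 * (X 1 * embedUV α)
      + X 2 * (X 2 * embedUV β) + X 2 * (X 3 ^ (m + 1) * embedUV β) := by
    rw [hf]; ring
  rw [hf']
  simp only [blowupSubst_add, blowupSubst_X_mul, ne_eq, Fin.reduceEq, not_false_eq_true,
    blowupSubst_X_three_pow_mul, blowupSubst_embedUV, blowupSubst_one, Nat.add_sub_cancel]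
  ring

/-- for `f = x² + xy + α(u,v)·y² + β(u,v)·u·(u+vⁿ)` with `α, β` units of
`k[[u,v]]` and `char k = 2`, the substitution `(x,y,u,v) ↦ (xv, yv, uv, v)` transforms `f`
into `v²·(x² + xy + α(uv,v)·y² + β(uv,v)·u·(u+v^{n-1}))`, where `α(uv,v)` and `β(uv,v)`
again have nonzero constant term. -/
theorem blowup_chart_self_similar
    (k : Type*) [Field k] [CharP k 2] (n : ℕ) (hn : 1 ≤ n)
    (α β : MvPowerSeries (Fin 2) k)
    (hα : constantCoeff α ≠ 0)
    (hβ : constantCoeff β ≠ 0)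
    (f : MvPowerSeries (Fin 4) k)
    (hf : f = (X 0)^2 + X 0 * X 1 + embedUV α * (X 1)^2
        + embedUV β * (X 2 * (X 2 + (X 3)^n))) :
    blowupSubst f = (X 3)^2 * ((X 0)^2 + X 0 * X 1 + embedUV (substUV α) * (X 1)^2
        + embedUV (substUV β) * (X 2 * (X 2 + (X 3)^(n-1)))) ∧
    constantCoeff (substUV α) ≠ 0 ∧
    constantCoeff (substUV β) ≠ 0 :=
  blowup_chart_self_similar_general k n hn α β hα hβ f hf
end
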